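/- Let λ > 0, 0 < q < ∞ and b ∈ ℝ. There exist constants c, C > 0 depending only on λ, q, b such that for every j₀ ∈ ℕ and every sequence (ξ_k)_{k≥0} of nonnegative reals, c · Σ_{j=j₀}^∞ 2^{jλq}(1+j)^{bq} ξ_j^q ≤ Σ_{j=j₀}^∞ 2^{jλq}(1+j)^{bq} (Σ_{k=j}^∞ ξ_k)^q ≤ C · Σ_{j=j₀}^∞ 2^{jλq}(1+j)^{bq} ξ_j^q, where both sides are allowed to be +∞ simultaneously. -/

import Mathlib

/-! For the upper bound take `s = 2^(-λ/2)`. Each term of a tail satisfies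
`x_m ≤ s^m (Σ_k s^(-kq) x_k^q)^(1/q)`, so `(Σ_m x_m)^q ≤ (1 - s)^(-q) Σ_m s^(-mq) x_m^q`.
The growing factor `s^(-mq) = 2^(mλq/2)` is absorbed by the weight: by Peetre's inequality
`w_j 2^(mλq/2) ≤ 2^(-mλq/2) (1 + m)^|bq| w_(j+m)`, and the right-hand factor is summable in `m`.
Exchanging the sums over `j` and `m` gives the constant. The lower bound holds termwise, since a
tail dominates its first term. -/

open scoped ENNReal NNReal

theorem ENNReal.rpow_tsum_le_geometric {s : ℝ≥0∞} (hs0 : s ≠ 0) (hs1 : s < 1) {q : ℝ}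
    (hq : 0 < q) (x : ℕ → ℝ≥0∞) :
    (∑' m, x m) ^ q ≤ (1 - s)⁻¹ ^ q * ∑' m, x m ^ q / (s ^ q) ^ m := by
  set S := ∑' m, x m ^ q / (s ^ q) ^ m
  have hsq0 : s ^ q ≠ 0 := (ENNReal.rpow_pos (pos_iff_ne_zero.2 hs0) hs1.ne_top).ne'
  have hsqt : s ^ q ≠ ∞ := ENNReal.rpow_ne_top_of_nonneg hq.le hs1.ne_top
  have hx : ∀ m, x m ≤ s ^ m * S ^ q⁻¹ := fun m => by
    have hcomm : (s ^ m) ^ q = (s ^ q) ^ m := by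
      rw [← ENNReal.rpow_natCast, ← ENNReal.rpow_mul, mul_comm, ENNReal.rpow_mul,
        ENNReal.rpow_natCast]
    rw [← ENNReal.rpow_le_rpow_iff hq, ENNReal.mul_rpow_of_nonneg _ _ hq.le,
      ENNReal.rpow_inv_rpow hq.ne', hcomm, mul_comm]
    exact (ENNReal.div_le_iff (pow_ne_zero m hsq0) (ENNReal.pow_ne_top hsqt)).1
      (ENNReal.le_tsum (f := fun m => x m ^ q / (s ^ q) ^ m) m)
  calc (∑' m, x m) ^ q ≤ (∑' m, s ^ m * S ^ q⁻¹) ^ q :=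
        ENNReal.rpow_le_rpow (ENNReal.tsum_le_tsum hx) hq.le
    _ = (1 - s)⁻¹ ^ q * S := by
        rw [ENNReal.tsum_mul_right, ENNReal.tsum_geometric, ENNReal.mul_rpow_of_nonneg _ _ hq.le,
          ENNReal.rpow_inv_rpow hq.ne']

theorem ENNReal.tsum_tsum_mul_add_le (φ a : ℕ → ℝ≥0∞) :
    ∑' j, ∑' m, φ m * a (j + m) ≤ (∑' m, φ m) * ∑' j, a j := by
  rw [ENNReal.tsum_comm, ← ENNReal.tsum_mul_right]
  gcongr with m
  rw [ENNReal.tsum_mul_left]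
  exact mul_le_mul_right (ENNReal.tsum_comp_le_tsum_of_injective (add_left_injective m) a) _

theorem ENNReal.tsum_mul_rpow_tsum_tail_le {s : ℝ≥0∞} (hs0 : s ≠ 0) (hs1 : s < 1) {q : ℝ}
    (hq : 0 < q) {w φ : ℕ → ℝ≥0∞} (hw : ∀ n m, w n ≤ (s ^ q) ^ m * φ m * w (n + m))
    (x : ℕ → ℝ≥0∞) :
    ∑' j, w j * (∑' k, x (j + k)) ^ q ≤ (1 - s)⁻¹ ^ q * (∑' m, φ m) * ∑' j, w j * x j ^ q := by
  have hsq0 : s ^ q ≠ 0 := (ENNReal.rpow_pos (pos_iff_ne_zero.2 hs0) hs1.ne_top).ne'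
  have hsqt : s ^ q ≠ ∞ := ENNReal.rpow_ne_top_of_nonneg hq.le hs1.ne_top
  calc ∑' j, w j * (∑' k, x (j + k)) ^ q
      ≤ ∑' j, w j * ((1 - s)⁻¹ ^ q * ∑' m, x (j + m) ^ q / (s ^ q) ^ m) := by
        gcongr with j
        exact ENNReal.rpow_tsum_le_geometric hs0 hs1 hq _
    _ = (1 - s)⁻¹ ^ q * ∑' j, ∑' m, w j / (s ^ q) ^ m * x (j + m) ^ q := by
        simp only [← ENNReal.tsum_mul_left, div_eq_mul_inv]
        exact tsum_congr fun j => tsum_congr fun m => by ring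
    _ ≤ (1 - s)⁻¹ ^ q * ∑' j, ∑' m, φ m * (w (j + m) * x (j + m) ^ q) := by
        refine mul_le_mul_right
          (ENNReal.tsum_le_tsum fun j => ENNReal.tsum_le_tsum fun m => ?_) _
        rw [← mul_assoc]
        gcongr ?_ * _
        rw [ENNReal.div_le_iff (pow_ne_zero m hsq0) (ENNReal.pow_ne_top hsqt), mul_comm]
        simpa only [mul_assoc] using hw j m
    _ ≤ (1 - s)⁻¹ ^ q * (∑' m, φ m) * ∑' j, w j * x j ^ q := by
        rw [mul_assoc]
        gcongr
        exact ENNReal.tsum_tsum_mul_add_le φ fun j => w j * x j ^ q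

theorem Real.peetre_one_add_rpow {x y : ℝ} (hx : 0 ≤ x) (hy : 0 ≤ y) (c : ℝ) :
    (1 + x) ^ c ≤ (1 + y) ^ |c| * (1 + (x + y)) ^ c := by
  rcases le_or_gt 0 c with hc | hc
  · rw [abs_of_nonneg hc]
    calc (1 + x) ^ c ≤ (1 + (x + y)) ^ c := Real.rpow_le_rpow (by positivity) (by linarith) hc
      _ ≤ (1 + y) ^ c * (1 + (x + y)) ^ c :=
        le_mul_of_one_le_left (by positivity) (Real.one_le_rpow (by linarith) hc)
  · obtain ⟨d, hd, rfl⟩ : ∃ d, 0 < d ∧ c = -d := ⟨-c, by linarith, by ring⟩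
    have hsub : (1 + (x + y)) ^ d ≤ (1 + y) ^ d * (1 + x) ^ d := by
      rw [← Real.mul_rpow (by linarith) (by linarith)]
      gcongr
      nlinarith
    rw [abs_neg, abs_of_pos hd, Real.rpow_neg (by linarith), Real.rpow_neg (by linarith),
      ← div_eq_mul_inv, ← one_div, div_le_div_iff₀ (by positivity) (by positivity), one_mul]
    exact hsub

theorem summable_geometric_mul_one_add_rpow {r : ℝ} (hr0 : 0 ≤ r) (hr1 : r < 1) (a : ℝ) :
    Summable fun m : ℕ => r ^ m * (1 + (m : ℝ)) ^ a := by
  obtain ⟨N, hN⟩ : ∃ N : ℕ, a ≤ N := ⟨⌈a⌉₊, Nat.le_ceil a⟩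
  have hdom : Summable fun m : ℕ => 2 ^ (N - 1) * (r ^ m + (m : ℝ) ^ N * r ^ m) :=
    ((summable_geometric_of_lt_one hr0 hr1).add
      (summable_pow_mul_geometric_of_norm_lt_one N (by rwa [Real.norm_of_nonneg hr0]))).mul_left _
  refine hdom.of_nonneg_of_le (fun m => by positivity) fun m => ?_
  calc r ^ m * (1 + (m : ℝ)) ^ a ≤ r ^ m * (1 + (m : ℝ)) ^ N := by
        gcongr
        rw [← Real.rpow_natCast]
        exact Real.rpow_le_rpow_of_exponent_le (by linarith [m.cast_nonneg (α := ℝ)]) hN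
    _ ≤ r ^ m * (2 ^ (N - 1) * (1 ^ N + (m : ℝ) ^ N)) := by
        gcongr
        exact add_pow_le zero_le_one m.cast_nonneg N
    _ = 2 ^ (N - 1) * (r ^ m + (m : ℝ) ^ N * r ^ m) := by ring

noncomputable def hardyWeight (l q b : ℝ) (n : ℕ) : ℝ :=
  2 ^ ((n : ℝ) * l * q) * (1 + (n : ℝ)) ^ (b * q)

theorem hardyWeight_le (l q b : ℝ) (n m : ℕ) :
    hardyWeight l q b n ≤ (2 ^ (-(l * q / 2)) : ℝ) ^ m *
      ((2 ^ (-(l * q / 2)) : ℝ) ^ m * (1 + (m : ℝ)) ^ |b * q|) * hardyWeight l q b (n + m) := by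
  have hpow : ((2 : ℝ) ^ (-(l * q / 2))) ^ m * (2 ^ (-(l * q / 2))) ^ m *
      2 ^ (((n + m : ℕ) : ℝ) * l * q) = 2 ^ ((n : ℝ) * l * q) := by
    rw [← Real.rpow_natCast, ← Real.rpow_mul zero_le_two, ← Real.rpow_add two_pos,
      ← Real.rpow_add two_pos]
    congr 1
    push_cast
    ring
  calc hardyWeight l q b n
      ≤ 2 ^ ((n : ℝ) * l * q) * ((1 + (m : ℝ)) ^ |b * q| * (1 + ((n : ℝ) + m)) ^ (b * q)) := by
        unfold hardyWeight
        gcongr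
        exact Real.peetre_one_add_rpow n.cast_nonneg m.cast_nonneg _
    _ = _ := by
        rw [← hpow, hardyWeight]
        push_cast
        ring

/-- Dual discrete Hardy-type inequality for tail sums with weights `2^{jλq}(1+j)^{bq}`.
Both sides may simultaneously be `+∞` (the sums are taken in `ℝ≥0∞`). -/
theorem hardy_tail_sums (l q b : ℝ) (hl : 0 < l) (hq : 0 < q) :
    ∃ c C : ℝ, 0 < c ∧ 0 < C ∧
      ∀ (j₀ : ℕ) (ξ : ℕ → ℝ≥0),
        (ENNReal.ofReal c *
            ∑' j : ℕ,
              ENNReal.ofReal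
                  ((2 : ℝ) ^ (((j₀ + j : ℕ) : ℝ) * l * q) * (1 + ((j₀ + j : ℕ) : ℝ)) ^ (b * q)) *
                (ξ (j₀ + j) : ℝ≥0∞) ^ q ≤
          ∑' j : ℕ,
              ENNReal.ofReal
                  ((2 : ℝ) ^ (((j₀ + j : ℕ) : ℝ) * l * q) * (1 + ((j₀ + j : ℕ) : ℝ)) ^ (b * q)) *
                (∑' k : ℕ, (ξ (j₀ + j + k) : ℝ≥0∞)) ^ q) ∧
        (∑' j : ℕ,
              ENNReal.ofReal
                  ((2 : ℝ) ^ (((j₀ + j : ℕ) : ℝ) * l * q) * (1 + ((j₀ + j : ℕ) : ℝ)) ^ (b * q)) *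
                (∑' k : ℕ, (ξ (j₀ + j + k) : ℝ≥0∞)) ^ q ≤
          ENNReal.ofReal C *
            ∑' j : ℕ,
              ENNReal.ofReal
                  ((2 : ℝ) ^ (((j₀ + j : ℕ) : ℝ) * l * q) * (1 + ((j₀ + j : ℕ) : ℝ)) ^ (b * q)) *
                (ξ (j₀ + j) : ℝ≥0∞) ^ q) := by
  set σ : ℝ := 2 ^ (-(l / 2))
  set ρ : ℝ := 2 ^ (-(l * q / 2))
  set φ : ℕ → ℝ := fun m => ρ ^ m * (1 + (m : ℝ)) ^ |b * q|
  have hσ0 : 0 < σ := by positivity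
  have hσ1 : σ < 1 := Real.rpow_lt_one_of_one_lt_of_neg one_lt_two (by linarith)
  have h1σ : 0 < 1 - σ := by linarith
  have hσq : σ ^ q = ρ := by rw [← Real.rpow_mul zero_le_two, neg_mul, div_mul_eq_mul_div]
  have hφ : Summable φ := summable_geometric_mul_one_add_rpow (by positivity)
    (hσq ▸ Real.rpow_lt_one hσ0.le hσ1 hq) _
  have hφ0 : 0 < ∑' m, φ m := hφ.tsum_pos (fun m => by positivity) 0 (by positivity)
  refine ⟨1, (1 - σ)⁻¹ ^ q * ∑' m, φ m, one_pos, ?_, fun j₀ ξ => ⟨?_, ?_⟩⟩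
  · positivity
  · rw [ENNReal.ofReal_one, one_mul]
    gcongr with j
    exact ENNReal.le_tsum (f := fun k => (ξ (j₀ + j + k) : ℝ≥0∞)) 0
  · have hC : ENNReal.ofReal ((1 - σ)⁻¹ ^ q * ∑' m, φ m) =
        (1 - ENNReal.ofReal σ)⁻¹ ^ q * ∑' m, ENNReal.ofReal (φ m) := by
      rw [ENNReal.ofReal_mul (by positivity),
        ENNReal.ofReal_tsum_of_nonneg (fun m => by positivity) hφ,
        ← ENNReal.ofReal_rpow_of_nonneg (by positivity) hq.le, ENNReal.ofReal_inv_of_pos h1σ,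
        ENNReal.ofReal_sub _ hσ0.le, ENNReal.ofReal_one]
    have hw : ∀ n m, ENNReal.ofReal (hardyWeight l q b (j₀ + n)) ≤
        (ENNReal.ofReal σ ^ q) ^ m * ENNReal.ofReal (φ m) *
          ENNReal.ofReal (hardyWeight l q b (j₀ + (n + m))) := fun n m => by
      rw [ENNReal.ofReal_rpow_of_nonneg hσ0.le hq.le, hσq, ← ENNReal.ofReal_pow (by positivity),
        ← ENNReal.ofReal_mul (by positivity), ← ENNReal.ofReal_mul (by positivity), ← add_assoc]
      exact ENNReal.ofReal_le_ofReal (hardyWeight_le l q b (j₀ + n) m)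
    have key := ENNReal.tsum_mul_rpow_tsum_tail_le (by simpa using hσ0)
      (ENNReal.ofReal_lt_one.2 hσ1) hq hw fun k => (ξ (j₀ + k) : ℝ≥0∞)
    simp only [← add_assoc] at key
    rw [hC]
    exact key
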